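/- The ∅-generic bisimulation game specialises to the branching bisimulation game: for all states s, t, we have s ≡b t (Duplicator wins the branching bisimulation game for position (s,t)) if and only if s ≡_∅ t (Duplicator wins the ∅-generic bisimulation game for position (s,t)). -/

import Mathlib

namespace GamesBisim

/-- Parameter values `o` (ordinary) and `b` (branching) for generic bisimulations. -/
inductive XY | o | b
deriving DecidableEq

/-- The faces ☹ (frown) and ☺ (smile). -/
inductive Face | frown | smile
deriving DecidableEq

/-- Rewards: `*` (star) and `✓` (check). -/
inductive Rw | star | check
deriving DecidableEq

/-- A labelled transition system with states `S`, actions `A` containing a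
distinguished silent action `tau`, and a transition relation. -/
structure LTS (S : Type u) (A : Type v) where
  tau : A
  Trans : S → A → S → Prop

namespace LTS

variable {S : Type u} {A : Type v}

/-- A single silent (τ) step. -/
def TauStep (L : LTS S A) (s s' : S) : Prop := L.Trans s L.tau s'

/-- `↠`: the reflexive-transitive closure of the τ-step relation. -/
def TauStar (L : LTS S A) : S → S → Prop := Relation.ReflTransGen L.TauStep

/-- `↠⁺`: the transitive closure of the τ-step relation. -/
def TauPlus (L : LTS S A) : S → S → Prop := Relation.TransGen L.TauStep

/-- An LTS is non-divergent if it admits no infinite sequence of τ-steps. -/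
def NonDivergent (L : LTS S A) : Prop :=
  ¬ ∃ f : ℕ → S, ∀ i, L.TauStep (f i) (f (i + 1))

/-- A symmetric relation `R` is a branching bisimulation. -/
def IsBranchingBisim (L : LTS S A) (R : S → S → Prop) : Prop :=
  (∀ s t, R s t → R t s) ∧
  ∀ s t a s', R s t → L.Trans s a s' →
    (a = L.tau ∧ R s' t) ∨
    ∃ t1 t', L.TauStar t t1 ∧ L.Trans t1 a t' ∧ R s t1 ∧ R s' t'

/-- Branching bisimilarity `≈b`. -/
def BranchingBisimilar (L : LTS S A) (s t : S) : Prop :=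
  ∃ R, L.IsBranchingBisim R ∧ R s t

/-- A symmetric relation `R` is a delay bisimulation. -/
def IsDelayBisim (L : LTS S A) (R : S → S → Prop) : Prop :=
  (∀ s t, R s t → R t s) ∧
  ∀ s t a s', R s t → L.Trans s a s' →
    (a = L.tau ∧ R s' t) ∨
    ∃ t1 t', L.TauStar t t1 ∧ L.Trans t1 a t' ∧ R s' t'

/-- The generalised weak transition `s ↠_{x,R,t} s'`: a weak transition `s ↠ s'`,
which in case `x = b` additionally satisfies `t R s` and `t R s'`. -/
def GenTauStar (L : LTS S A) (x : XY) (R : S → S → Prop) (t : S) (s s' : S) : Prop :=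
  L.TauStar s s' ∧ (x = XY.b → R t s ∧ R t s')

/-- The strong generalised weak transition `s ⟹_{x,R,t} s'`: a weak transition
`s ↠ s'`, which in case `x = b` is witnessed by a finite τ-path all of whose states
are related to `t` by `R`. -/
def SGenTauStar (L : LTS S A) (x : XY) (R : S → S → Prop) (t : S) (s s' : S) : Prop :=
  L.TauStar s s' ∧
  (x = XY.b → R t s ∧ Relation.ReflTransGen (fun u u' => L.TauStep u u' ∧ R t u') s s')

/-- A symmetric relation `R` is an `(x,y)`-generic bisimulation. -/
def IsGenBisim (L : LTS S A) (x y : XY) (R : S → S → Prop) : Prop :=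
  (∀ s t, R s t → R t s) ∧
  ∀ s t a s', R s t → L.Trans s a s' →
    (a = L.tau ∧ R s' t) ∨
    ∃ t1 t2 t', L.GenTauStar x R s t t1 ∧ L.Trans t1 a t2 ∧
      L.GenTauStar y R s' t2 t' ∧ R s' t'

/-- `(x,y)`-generic bisimilarity `≈_{(x,y)}`. -/
def GenBisimilar (L : LTS S A) (x y : XY) (s t : S) : Prop :=
  ∃ R, L.IsGenBisim x y R ∧ R s t

/-- A symmetric relation `R` is an `(x,y)`-generic bisimulation with explicit
divergence (divergence condition D₄). -/
def IsGenBisimED (L : LTS S A) (x y : XY) (R : S → S → Prop) : Prop :=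
  L.IsGenBisim x y R ∧
  ∀ s t, R s t → ∀ f : ℕ → S, f 0 = s → (∀ i, L.TauStep (f i) (f (i + 1))) →
    ∃ t' k, L.TauPlus t t' ∧ R (f k) t'

/-- `(x,y)`-generic bisimilarity with explicit divergence `≈ed_{(x,y)}`. -/
def GenBisimilarED (L : LTS S A) (x y : XY) (s t : S) : Prop :=
  ∃ R, L.IsGenBisimED x y R ∧ R s t

end LTS

/-- A relation `R` has the stuttering property: whenever
`t₀ →τ t₁ →τ ⋯ →τ t_k` and `t₀ R t_k`, then `t_i R t_j` for all `0 ≤ i,j ≤ k`. -/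
def StutteringProperty {S : Type u} {A : Type v} (L : LTS S A) (R : S → S → Prop) : Prop :=
  ∀ (k : ℕ) (t : ℕ → S),
    (∀ i < k, L.TauStep (t i) (t (i + 1))) → R (t 0) (t k) →
    ∀ i j, i ≤ k → j ≤ k → R (t i) (t j)

/-! ## Two-player games

A play is a maximal (finite or infinite) sequence of configurations connected by
moves, represented as `π : ℕ → Option C` which is `none` from the point (if any)
where the play has ended; a play may only end in a configuration whose owner is
stuck. A strategy for a player is a (positional) function `σ : C → C` which is
required to pick a legal move at every configuration owned by that player admitting
at least one move; a play is consistent with `σ` if every move taken from a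
configuration owned by that player follows `σ`. -/

section Games

variable {C : Type u}

/-- `π` is a maximal play of the game with move relation `move`. -/
def IsPlay (move : C → C → Prop) (π : ℕ → Option C) : Prop :=
  (∀ i c d, π i = some c → π (i + 1) = some d → move c d) ∧
  (∀ i c, π i = some c → π (i + 1) = none → ∀ d, ¬ move c d) ∧
  (∀ i, π i = none → π (i + 1) = none)

/-- The play `π` is consistent with strategy `σ` of the player owning the
configurations satisfying `owned`. -/
def ConsistentWith (owned : C → Prop) (σ : C → C) (π : ℕ → Option C) : Prop :=
  ∀ i c d, π i = some c → owned c → π (i + 1) = some d → d = σ c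

/-- `σ` is a valid strategy for the player owning the configurations satisfying
`owned`: it picks a legal move wherever a move exists. -/
def ValidStrategy (owned : C → Prop) (move : C → C → Prop) (σ : C → C) : Prop :=
  ∀ c, owned c → (∃ d, move c d) → move c (σ c)

/-- The play `π` is finite and ends in the configuration `c`. -/
def EndsAt (π : ℕ → Option C) (c : C) : Prop := ∃ i, π i = some c ∧ π (i + 1) = none

/-- The play `π` is infinite. -/
def InfinitePlay (π : ℕ → Option C) : Prop := ∀ i, π i ≠ none

/-- The Büchi winning condition on infinite plays: the play passes through
infinitely many configurations carrying a `✓` reward. -/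
def BuchiWin (reward : C → Prop) (π : ℕ → Option C) : Prop :=
  ∀ n, ∃ i, n ≤ i ∧ ∃ c, π i = some c ∧ reward c

/-- Duplicator wins the play `π`: either the play is finite and Spoiler is stuck,
or the play is infinite and satisfies the winning condition `infWin`. -/
def DupWinsPlay (dupOwned : C → Prop) (infWin : (ℕ → Option C) → Prop)
    (π : ℕ → Option C) : Prop :=
  (∃ c, EndsAt π c ∧ ¬ dupOwned c) ∨ (InfinitePlay π ∧ infWin π)

/-- Spoiler wins the play `π` (all plays not won by Duplicator). -/
def SpWinsPlay (dupOwned : C → Prop) (infWin : (ℕ → Option C) → Prop)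
    (π : ℕ → Option C) : Prop :=
  (∃ c, EndsAt π c ∧ dupOwned c) ∨ (InfinitePlay π ∧ ¬ infWin π)

/-- Duplicator wins the configuration `c`: she has a strategy winning all plays
starting in `c`. -/
def DupWins (dupOwned : C → Prop) (move : C → C → Prop)
    (infWin : (ℕ → Option C) → Prop) (c : C) : Prop :=
  ∃ σ : C → C, ValidStrategy dupOwned move σ ∧
    ∀ π, IsPlay move π → π 0 = some c → ConsistentWith dupOwned σ π →
      DupWinsPlay dupOwned infWin π

/-- Spoiler wins the configuration `c`: he has a strategy winning all plays
starting in `c`. -/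
def SpWins (dupOwned : C → Prop) (move : C → C → Prop)
    (infWin : (ℕ → Option C) → Prop) (c : C) : Prop :=
  ∃ σ : C → C, ValidStrategy (fun d => ¬ dupOwned d) move σ ∧
    ∀ π, IsPlay move π → π 0 = some c → ConsistentWith (fun d => ¬ dupOwned d) σ π →
      SpWinsPlay dupOwned infWin π

end Games

/-! ## The limited branching bisimulation (lbb) game -/

/-- Configurations of the lbb game: Spoiler-owned `⟨(s,t)⟩` and Duplicator-owned
`⟨(s,t),(a,s')⟩`. -/
inductive LConf (S : Type u) (A : Type v)
  | sp (p : S × S)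
  | dup (p : S × S) (c : A × S)

/-- Ownership in the lbb game. -/
def LConf.dupOwned {S : Type u} {A : Type v} : LConf S A → Prop
  | .sp _ => False
  | .dup _ _ => True

/-- Moves of the lbb game. -/
inductive LMove {S : Type u} {A : Type v} (L : LTS S A) : LConf S A → LConf S A → Prop
  | sp1 {s t a s'} (h : L.Trans s a s') :
      LMove L (LConf.sp (s, t)) (LConf.dup (s, t) (a, s'))
  | sp2 {s t a t'} (h : L.Trans t a t') :
      LMove L (LConf.sp (s, t)) (LConf.dup (t, s) (a, t'))
  | dup1 {u v u'} :
      LMove L (LConf.dup (u, v) (L.tau, u')) (LConf.sp (u', v))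
  | dup2 {u v a u' v'} (h : L.Trans v a v') :
      LMove L (LConf.dup (u, v) (a, u')) (LConf.sp (u', v'))
  | dup3 {u v a u' v'} (h : L.TauStep v v') :
      LMove L (LConf.dup (u, v) (a, u')) (LConf.sp (u, v'))

/-- `s ≡lb t`: Duplicator wins the lbb game from `⟨(s,t)⟩_S`; finite plays are won
by Duplicator iff Spoiler is stuck, and all infinite plays are won by Duplicator. -/
def LTS.lbbEquiv {S : Type u} {A : Type v} (L : LTS S A) (s t : S) : Prop :=
  DupWins LConf.dupOwned (LMove L) (fun _ => True) (LConf.sp (s, t))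

/-! ## The branching bisimulation (bb) game -/

/-- Configurations of the bb game: `⟨(s,t),c,r⟩` owned by Spoiler or Duplicator,
with challenge `c ∈ (A × S) ∪ {†}` (where `none` is `†`) and reward `r`. -/
inductive BConf (S : Type u) (A : Type v)
  | sp (p : S × S) (c : Option (A × S)) (r : Rw)
  | dup (p : S × S) (c : Option (A × S)) (r : Rw)

/-- Ownership in the bb game. -/
def BConf.dupOwned {S : Type u} {A : Type v} : BConf S A → Prop
  | .sp _ _ _ => False
  | .dup _ _ _ => True

/-- The configuration carries a `✓` reward. -/
def BConf.reward {S : Type u} {A : Type v} : BConf S A → Prop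
  | .sp _ _ r => r = Rw.check
  | .dup _ _ r => r = Rw.check

/-- Moves of the bb game. -/
inductive BMove {S : Type u} {A : Type v} (L : LTS S A) : BConf S A → BConf S A → Prop
  | sp1star {s t c r a s'} (h : L.Trans s a s') (hc : c = some (a, s') ∨ c = none) :
      BMove L (BConf.sp (s, t) c r) (BConf.dup (s, t) (some (a, s')) Rw.star)
  | sp1check {s t c r a s'} (h : L.Trans s a s')
      (hc : ¬(c = some (a, s') ∨ c = none)) :
      BMove L (BConf.sp (s, t) c r) (BConf.dup (s, t) (some (a, s')) Rw.check)
  | sp2 {s t c r a t'} (h : L.Trans t a t') :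
      BMove L (BConf.sp (s, t) c r) (BConf.dup (t, s) (some (a, t')) Rw.check)
  | dup1 {u v u' r} :
      BMove L (BConf.dup (u, v) (some (L.tau, u')) r) (BConf.sp (u', v) none Rw.check)
  | dup2 {u v a u' v' r} (h : L.Trans v a v') :
      BMove L (BConf.dup (u, v) (some (a, u')) r) (BConf.sp (u', v') none Rw.check)
  | dup3 {u v a u' v' r} (h : L.TauStep v v') :
      BMove L (BConf.dup (u, v) (some (a, u')) r)
        (BConf.sp (u, v') (some (a, u')) Rw.star)

/-- `s ≡b t`: Duplicator wins the bb game from `⟨(s,t),†,*⟩_S`, where infinite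
plays are won by Duplicator iff they yield infinitely many `✓` rewards. -/
def LTS.bbEquiv {S : Type u} {A : Type v} (L : LTS S A) (s t : S) : Prop :=
  DupWins BConf.dupOwned (BMove L) (BuchiWin BConf.reward) (BConf.sp (s, t) none Rw.star)

/-! ## The generic bisimulation (gb) game, and its explicit-divergence variant -/

/-- Configurations of the generic games: `⟨(s,t),c,m,r⟩` owned by Spoiler or
Duplicator, with challenge `c ∈ (A × S) ∪ {†}`, partial match
`m ∈ (S × {☹,☺}) ∪ {†}` and reward `r`. -/
inductive GConf (S : Type u) (A : Type v)
  | sp (p : S × S) (c : Option (A × S)) (m : Option (S × Face)) (r : Rw)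
  | dup (p : S × S) (c : Option (A × S)) (m : Option (S × Face)) (r : Rw)

/-- Ownership in the generic games. -/
def GConf.dupOwned {S : Type u} {A : Type v} : GConf S A → Prop
  | .sp _ _ _ _ => False
  | .dup _ _ _ _ => True

/-- The configuration carries a `✓` reward. -/
def GConf.reward {S : Type u} {A : Type v} : GConf S A → Prop
  | .sp _ _ _ r => r = Rw.check
  | .dup _ _ _ r => r = Rw.check

/-- Moves of the `E`-generic bisimulation game. The parameter `rw1` is the reward
handed out by Duplicator's rule (1): `✓` in the gb game, `*` in the gbed game. -/
inductive GMove {S : Type u} {A : Type v} (L : LTS S A) (E : Set Face) (rw1 : Rw) :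
    GConf S A → GConf S A → Prop
  | sp1 {s t c m r} (hc : c ≠ none) :
      GMove L E rw1 (GConf.sp (s, t) c m r) (GConf.dup (s, t) c m Rw.star)
  | sp2a {s t m r a s'} (h : L.Trans s a s') :
      GMove L E rw1 (GConf.sp (s, t) none m r)
        (GConf.dup (s, t) (some (a, s')) (some (t, Face.frown)) Rw.star)
  | sp2b {s t c m r a s'} (h : L.Trans s a s') (hc : c ≠ some (a, s')) :
      GMove L E rw1 (GConf.sp (s, t) c m r)
        (GConf.dup (s, t) (some (a, s')) (some (t, Face.frown)) Rw.check)
  | sp3 {s t c m r a t'} (h : L.Trans t a t') :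
      GMove L E rw1 (GConf.sp (s, t) c m r)
        (GConf.dup (t, s) (some (a, t')) (some (s, Face.frown)) Rw.check)
  | dup1 {u v u' vb f r} :
      GMove L E rw1 (GConf.dup (u, v) (some (L.tau, u')) (some (vb, f)) r)
        (GConf.sp (u', vb) none none rw1)
  | dup2a {u v a u' vb v' r} (h : L.Trans vb a v') :
      GMove L E rw1 (GConf.dup (u, v) (some (a, u')) (some (vb, Face.frown)) r)
        (GConf.sp (u', v') (some (a, u')) (some (v', Face.smile)) Rw.star)
  | dup2b {u v a u' vb v' r} (h : L.Trans vb a v') :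
      GMove L E rw1 (GConf.dup (u, v) (some (a, u')) (some (vb, Face.frown)) r)
        (GConf.sp (u', v') none none Rw.check)
  | dup2c {u v a u' vb v' r} (h : L.Trans vb a v') (hE : Face.smile ∈ E) :
      GMove L E rw1 (GConf.dup (u, v) (some (a, u')) (some (vb, Face.frown)) r)
        (GConf.sp (u, v) (some (a, u')) (some (v', Face.smile)) Rw.star)
  | dup3a {u v a u' vb f v' r} (h : L.TauStep vb v') :
      GMove L E rw1 (GConf.dup (u, v) (some (a, u')) (some (vb, f)) r)
        (GConf.sp (u, v') (some (a, u')) (some (v', f)) Rw.star)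
  | dup3b {u v a u' vb v' r} (h : L.TauStep vb v') :
      GMove L E rw1 (GConf.dup (u, v) (some (a, u')) (some (vb, Face.smile)) r)
        (GConf.sp (u', v') none none Rw.check)
  | dup3c {u v a u' vb f v' r} (h : L.TauStep vb v') (hE : f ∈ E) :
      GMove L E rw1 (GConf.dup (u, v) (some (a, u')) (some (vb, f)) r)
        (GConf.sp (u, v) (some (a, u')) (some (v', f)) Rw.star)

/-- `E(x,y) ⊆ {☹,☺}`: the smallest set containing `☹` when `x = o` and `☺` when
`y = o`. -/
def Exy (x y : XY) : Set Face :=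
  {f | (f = Face.frown ∧ x = XY.o) ∨ (f = Face.smile ∧ y = XY.o)}

/-- `s ≡_E t`: Duplicator wins the `E`-generic bisimulation game from
`⟨(s,t),†,†,*⟩_S`; infinite plays are won by Duplicator iff they yield infinitely
many `✓` rewards. -/
def LTS.gbEquiv {S : Type u} {A : Type v} (L : LTS S A) (E : Set Face) (s t : S) : Prop :=
  DupWins GConf.dupOwned (GMove L E Rw.check) (BuchiWin GConf.reward)
    (GConf.sp (s, t) none none Rw.star)

/-- `s ≡ed_E t`: Duplicator wins the `E`-generic bisimulation with explicit
divergence game from `⟨(s,t),†,†,*⟩_S`. -/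
def LTS.gbedEquiv {S : Type u} {A : Type v} (L : LTS S A) (E : Set Face) (s t : S) : Prop :=
  DupWins GConf.dupOwned (GMove L E Rw.star) (BuchiWin GConf.reward)
    (GConf.sp (s, t) none none Rw.star)

/-- The abstraction function `f(⟨(s,t),c,m,r⟩) = ⟨(s,t),c,r⟩` from configurations
of the generic game to configurations of the bb game, preserving ownership. -/
def fabs {S : Type u} {A : Type v} : GConf S A → BConf S A
  | .sp p c _ r => .sp p c r
  | .dup p c _ r => .dup p c r



/-! ## Auxiliary infrastructure for the proof of Statement 13 -/

attribute [local instance] Classical.propDecidable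

section TransferInfra

variable {C : Type w}

/-- Duplicator's fixed strategy `σ` wins every `σ`-consistent play from `c`. -/
def WinsFrom (own : C → Prop) (mv : C → C → Prop) (iw : (ℕ → Option C) → Prop)
    (σ : C → C) (c : C) : Prop :=
  ∀ π, IsPlay mv π → π 0 = some c → ConsistentWith own σ π →
    DupWinsPlay own iw π

theorem winsFrom_step {own : C → Prop} {mv : C → C → Prop}
    {rw : C → Prop} {σ : C → C} {c d : C}
    (hw : WinsFrom own mv (BuchiWin rw) σ c) (hm : mv c d) (hcons : own c → d = σ c) :
    WinsFrom own mv (BuchiWin rw) σ d := by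
  intro π hp h0 hc
  set π' : ℕ → Option C := fun i => Nat.rec (some c) (fun j _ => π j) i with hπ'
  have hπ'0 : π' 0 = some c := rfl
  have hπ's : ∀ j, π' (j + 1) = π j := fun j => rfl
  have hp' : IsPlay mv π' := by
    refine ⟨?_, ?_, ?_⟩
    · intro i e f he hf
      cases i with
      | zero =>
        rw [hπ'0] at he; rw [hπ's, h0] at hf
        cases he; cases hf; exact hm
      | succ j =>
        rw [hπ's] at he; rw [hπ's] at hf
        exact hp.1 j e f he hf
    · intro i e he hn
      cases i with
      | zero => rw [hπ's, h0] at hn; cases hn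
      | succ j =>
        rw [hπ's] at he; rw [hπ's] at hn
        exact hp.2.1 j e he hn
    · intro i hn
      cases i with
      | zero => rw [hπ'0] at hn; cases hn
      | succ j =>
        rw [hπ's] at hn; rw [hπ's]
        exact hp.2.2 j hn
  have hc' : ConsistentWith own σ π' := by
    intro i e f he ho hf
    cases i with
    | zero =>
      rw [hπ'0] at he; cases he
      rw [hπ's, h0] at hf; cases hf
      exact hcons ho
    | succ j =>
      rw [hπ's] at he; rw [hπ's] at hf
      exact hc j e f he ho hf
  have hwin := hw π' hp' hπ'0 hc'
  rcases hwin with ⟨e, ⟨i, hie, hin⟩, hne⟩ | ⟨hinf, hbw⟩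
  · left
    refine ⟨e, ?_, hne⟩
    cases i with
    | zero =>
      rw [hπ's, h0] at hin; cases hin
    | succ j =>
      exact ⟨j, by rw [← hπ's j]; exact hie, by rw [← hπ's (j + 1)]; exact hin⟩
  · right
    constructor
    · intro i; have := hinf (i + 1); rw [hπ's] at this; exact this
    · intro n
      obtain ⟨i, hni, e, hie, hre⟩ := hbw (n + 1)
      cases i with
      | zero => omega
      | succ j =>
        rw [hπ's] at hie
        exact ⟨j, by omega, e, hie, hre⟩

theorem winsFrom_hasMove {own : C → Prop} {mv : C → C → Prop}
    {iw : (ℕ → Option C) → Prop} {σ : C → C} {c : C}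
    (hw : WinsFrom own mv iw σ c) (ho : own c) : ∃ d, mv c d := by
  by_contra hn
  push_neg at hn
  set π : ℕ → Option C := fun i => if i = 0 then some c else none with hπ
  have hp : IsPlay mv π := by
    refine ⟨?_, ?_, ?_⟩
    · intro i e f he hf
      simp only [hπ] at hf
      split at hf
      · omega
      · cases hf
    · intro i e he _
      simp only [hπ] at he
      split at he
      · cases he; exact hn
      · cases he
    · intro i _
      simp only [hπ]
      split
      · omega
      · rfl
  have hc : ConsistentWith own σ π := by
    intro i e f he hoe hf
    simp only [hπ] at hf
    split at hf
    · omega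
    · cases hf
  have h0 : π 0 = some c := by simp [hπ]
  rcases hw π hp h0 hc with ⟨e, ⟨i, hie, _⟩, hne⟩ | ⟨hinf, _⟩
  · simp only [hπ] at hie
    split at hie
    · cases hie; exact hne ho
    · cases hie
  · have := hinf 1
    simp [hπ] at this

theorem winsFrom_valid {own : C → Prop} {mv : C → C → Prop}
    {rw : C → Prop} {σ : C → C} {c : C}
    (hw : WinsFrom own mv (BuchiWin rw) σ c) (hv : ValidStrategy own mv σ) (ho : own c) :
    mv c (σ c) ∧ WinsFrom own mv (BuchiWin rw) σ (σ c) := by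
  have hm := hv c ho (winsFrom_hasMove hw ho)
  exact ⟨hm, winsFrom_step hw hm (fun _ => rfl)⟩

theorem antitone_eventually_const (f : ℕ → ℕ) (hf : ∀ i, f (i + 1) ≤ f i) :
    ∃ N, ∀ i, N ≤ i → f i = f N := by
  have key : ∀ n (g : ℕ → ℕ), g 0 ≤ n → (∀ i, g (i + 1) ≤ g i) →
      ∃ N, ∀ i, N ≤ i → g i = g N := by
    intro n
    induction n with
    | zero =>
      intro g hg0 hgmono
      refine ⟨0, fun i _ => ?_⟩
      have hmono : ∀ i, g i ≤ g 0 := by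
        intro i
        induction i with
        | zero => exact le_refl _
        | succ j ih => exact le_trans (hgmono j) ih
      have h1 := hmono i
      omega
    | succ n ih =>
      intro g hg0 hgmono
      by_cases hlt : ∃ j, g j < g 0
      · obtain ⟨j, hj⟩ := hlt
        obtain ⟨N, hN⟩ := ih (fun i => g (j + i))
          (by show g (j + 0) ≤ n; rw [Nat.add_zero]; omega) (fun i => hgmono (j + i))
        refine ⟨j + N, fun i hi => ?_⟩
        have h1 := hN (i - j) (by omega)
        rw [show j + (i - j) = i by omega] at h1
        exact h1
      · push_neg at hlt
        have hmono : ∀ i, g i ≤ g 0 := by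
          intro i
          induction i with
          | zero => exact le_refl _
          | succ j ihh => exact le_trans (hgmono j) ihh
        refine ⟨0, fun i _ => ?_⟩
        have := hlt i; have := hmono i; omega
  exact key (f 0) f (le_refl _) hf

/-- Generic strategy-transfer theorem: from a winning strategy `σ₁` in game 1
and an invariant/simulation `Inv` (with ranking `rank`), the strategy `σ₂` wins
game 2 from any invariant-related configuration. -/
theorem transfer {C₁ : Type w1} {C₂ : Type w2}
    (own₁ : C₁ → Prop) (mv₁ : C₁ → C₁ → Prop) (rw₁ : C₁ → Prop) (σ₁ : C₁ → C₁)
    (own₂ : C₂ → Prop) (mv₂ : C₂ → C₂ → Prop) (rw₂ : C₂ → Prop) (σ₂ : C₂ → C₂)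
    (Inv : C₂ → C₁ → Prop) (rank : C₂ → C₁ → ℕ)
    (hW : ∀ c g, Inv c g → WinsFrom own₁ mv₁ (BuchiWin rw₁) σ₁ g)
    (H1 : ∀ c g, Inv c g → own₂ c → ∃ d, mv₂ c d)
    (H2 : ∀ c g d, Inv c g → mv₂ c d → (own₂ c → d = σ₂ c) →
      ∃ g', Inv d g' ∧
        ((mv₁ g g' ∧ (own₁ g → g' = σ₁ g) ∧ (rw₁ g' → rw₂ d)) ∨
          rank d g' < rank c g ∨ rw₂ d) ∧
        (¬ rw₂ d → rank d g' ≤ rank c g))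
    {c₀ : C₂} {g₀ : C₁} (h0 : Inv c₀ g₀) :
    WinsFrom own₂ mv₂ (BuchiWin rw₂) σ₂ c₀ := by
  intro π hp hπ0 hcons
  -- the paired sequence in game 1
  set Q : ℕ → C₁ → C₁ → Prop := fun i g g' =>
    ∀ c d, π i = some c → π (i + 1) = some d →
      Inv d g' ∧
        ((mv₁ g g' ∧ (own₁ g → g' = σ₁ g) ∧ (rw₁ g' → rw₂ d)) ∨
          rank d g' < rank c g ∨ rw₂ d) ∧
        (¬ rw₂ d → rank d g' ≤ rank c g) with hQdef
  set h : ℕ → C₁ := fun i => Nat.rec g₀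
    (fun j gj => if H : ∃ g', Q j gj g' then H.choose else gj) i with hh
  have hstep : ∀ j, h (j + 1) = if H : ∃ g', Q j (h j) g' then H.choose else h j := by
    intro j; rfl
  have hInv : ∀ i c, π i = some c → Inv c (h i) := by
    intro i
    induction i with
    | zero =>
      intro c hc
      rw [hπ0] at hc; cases hc; exact h0
    | succ j ih =>
      intro d hd
      obtain ⟨c, hc⟩ : ∃ c, π j = some c := by
        cases hjc : π j with
        | none => rw [hp.2.2 j hjc] at hd; cases hd
        | some c => exact ⟨c, rfl⟩
      have hmv : mv₂ c d := hp.1 j c d hc hd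
      have hco : own₂ c → d = σ₂ c := fun ho => hcons j c d hc ho hd
      obtain ⟨g', hg'⟩ := H2 c (h j) d (ih c hc) hmv hco
      have hex : ∃ g', Q j (h j) g' := by
        refine ⟨g', ?_⟩
        intro c' d' hc' hd'
        rw [hc] at hc'; cases hc'
        rw [hd] at hd'; cases hd'
        exact hg'
      rw [hstep j, dif_pos hex]
      exact (hex.choose_spec c d hc hd).1
  have hQh : ∀ j c d, π j = some c → π (j + 1) = some d →
      Inv d (h (j + 1)) ∧
        ((mv₁ (h j) (h (j + 1)) ∧ (own₁ (h j) → h (j + 1) = σ₁ (h j)) ∧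
            (rw₁ (h (j + 1)) → rw₂ d)) ∨
          rank d (h (j + 1)) < rank c (h j) ∨ rw₂ d) ∧
        (¬ rw₂ d → rank d (h (j + 1)) ≤ rank c (h j)) := by
    intro j c d hc hd
    have hmv : mv₂ c d := hp.1 j c d hc hd
    have hco : own₂ c → d = σ₂ c := fun ho => hcons j c d hc ho hd
    obtain ⟨g', hg'⟩ := H2 c (h j) d (hInv j c hc) hmv hco
    have hex : ∃ g', Q j (h j) g' := by
      refine ⟨g', ?_⟩
      intro c' d' hc' hd'
      rw [hc] at hc'; cases hc'
      rw [hd] at hd'; cases hd'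
      exact hg'
    rw [hstep j, dif_pos hex]
    exact hex.choose_spec c d hc hd
  by_cases hfin : ∃ i, π i = none
  · -- finite play: ends at a configuration where Spoiler is stuck
    left
    have h0ne : π 0 ≠ none := by rw [hπ0]; exact fun h => by cases h
    obtain ⟨k, hk, hkmin⟩ : ∃ k, π k = none ∧ ∀ j, j < k → π j ≠ none :=
      ⟨Nat.find hfin, Nat.find_spec hfin, fun j hj => Nat.find_min hfin hj⟩
    cases k with
    | zero => exact absurd hk h0ne
    | succ m =>
      obtain ⟨c, hc⟩ : ∃ c, π m = some c := by
        cases hmc : π m with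
        | none => exact absurd hmc (hkmin m (Nat.lt_succ_self m))
        | some c => exact ⟨c, rfl⟩
      refine ⟨c, ⟨m, hc, hk⟩, ?_⟩
      intro ho
      obtain ⟨d, hd⟩ := H1 c (h m) (hInv m c hc) ho
      exact hp.2.1 m c hc hk d hd
  · push_neg at hfin
    right
    refine ⟨hfin, ?_⟩
    by_contra hB
    simp only [BuchiWin] at hB
    push_neg at hB
    obtain ⟨n, hn⟩ := hB
    have hnr : ∀ i, n ≤ i → ∀ c, π i = some c → ¬ rw₂ c := by
      intro i hi c hc hr
      exact (hn i hi) c hc hr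
    have hsome : ∀ i, ∃ c, π i = some c := by
      intro i
      cases hic : π i with
      | none => exact absurd hic (hfin i)
      | some c => exact ⟨c, rfl⟩
    set cf : ℕ → C₂ := fun i => (hsome i).choose with hcf
    have hcfs : ∀ i, π i = some (cf i) := fun i => (hsome i).choose_spec
    set r : ℕ → ℕ := fun j => rank (cf (n + j)) (h (n + j)) with hr
    have hrmono : ∀ j, r (j + 1) ≤ r j := by
      intro j
      have hq := hQh (n + j) (cf (n + j)) (cf (n + j + 1)) (hcfs _) (hcfs _)
      have hnr' : ¬ rw₂ (cf (n + j + 1)) := hnr (n + j + 1) (by omega) _ (hcfs _)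
      have := hq.2.2 hnr'
      simpa [hr, show n + (j + 1) = n + j + 1 by omega] using this
    obtain ⟨N, hN⟩ := antitone_eventually_const r hrmono
    set m := n + N with hm
    have hgood : ∀ j, mv₁ (h (m + j)) (h (m + j + 1)) ∧
        (own₁ (h (m + j)) → h (m + j + 1) = σ₁ (h (m + j))) ∧
        ¬ rw₁ (h (m + j + 1)) := by
      intro j
      have hq := hQh (m + j) (cf (m + j)) (cf (m + j + 1)) (hcfs _) (hcfs _)
      have hnr' : ¬ rw₂ (cf (m + j + 1)) := hnr (m + j + 1) (by omega) _ (hcfs _)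
      rcases hq.2.1 with ⟨h1, h2, h3⟩ | hlt | hrw
      · exact ⟨h1, h2, fun hr1 => hnr' (h3 hr1)⟩
      · exfalso
        have e1 : rank (cf (m + j + 1)) (h (m + j + 1)) = r N := by
          have := hN (N + j + 1) (by omega)
          simpa [hr, hm, show n + (N + j + 1) = n + N + j + 1 by omega] using this
        have e2 : rank (cf (m + j)) (h (m + j)) = r N := by
          have := hN (N + j) (by omega)
          simpa [hr, hm, show n + (N + j) = n + N + j by omega] using this
        omega
      · exact absurd hrw hnr'
    set π₁ : ℕ → Option C₁ := fun j => some (h (m + j)) with hπ₁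
    have hp₁ : IsPlay mv₁ π₁ := by
      refine ⟨?_, ?_, ?_⟩
      · intro i e f he hf
        simp only [hπ₁] at he hf
        cases he; cases hf
        have := (hgood i).1
        rwa [show m + (i + 1) = m + i + 1 by omega]
      · intro i e _ hn'
        simp only [hπ₁] at hn'; cases hn'
      · intro i hn'
        simp only [hπ₁] at hn'; cases hn'
    have hcons₁ : ConsistentWith own₁ σ₁ π₁ := by
      intro i e f he ho hf
      simp only [hπ₁] at he hf
      cases he; cases hf
      rw [show m + (i + 1) = m + i + 1 by omega]
      exact (hgood i).2.1 ho
    have hwm := hW (cf m) (h m) (hInv m (cf m) (hcfs m)) π₁ hp₁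
      (by simp [hπ₁]) hcons₁
    rcases hwm with ⟨e, ⟨i, _, hin⟩, _⟩ | ⟨_, hbw⟩
    · simp only [hπ₁] at hin; cases hin
    · obtain ⟨i, hi1, e, hie, hre⟩ := hbw 1
      simp only [hπ₁] at hie
      cases hie
      cases i with
      | zero => omega
      | succ j =>
        have := (hgood j).2.2
        rw [show m + (j + 1) = m + j + 1 by omega] at hre
        exact this hre

end TransferInfra


/-! ## Direction 1: a winning Duplicator strategy in the bb game yields one in
the `∅`-generic game. -/

section Dir1

variable {S : Type u} {A : Type v} (L : LTS S A) (σb : BConf S A → BConf S A)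

/-- Duplicator wins the bb game from `b` using `σb`. -/
def Wb (b : BConf S A) : Prop :=
  WinsFrom BConf.dupOwned (BMove L) (BuchiWin BConf.reward) σb b

/-- Mirror a bb move target back to a gb move target. -/
def gmir (g : GConf S A) : BConf S A → GConf S A
  | .sp q none _ => .sp q none none .check
  | .sp q (some ch) _ => .sp q (some ch) (some (q.2, .frown)) .star
  | _ => g

/-- The preferred paired bb configuration for a gb Duplicator configuration. -/
noncomputable def pick1 (p : S × S) (ch : A × S) : BConf S A :=
  if Wb L σb (.dup p (some ch) .star) then .dup p (some ch) .star
  else .dup p (some ch) .check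

noncomputable def fbG (g : GConf S A) : GConf S A :=
  if h : ∃ d, GMove L (∅ : Set Face) Rw.check g d then h.choose else g

/-- The constructed gb strategy. -/
noncomputable def sigG : GConf S A → GConf S A := fun g =>
  match g with
  | .dup p (some ch) (some (vb, Face.frown)) r =>
      if Wb L σb (pick1 L σb (p.1, vb) ch) then
        gmir (.dup p (some ch) (some (vb, Face.frown)) r)
          (σb (pick1 L σb (p.1, vb) ch))
      else fbG L (.dup p (some ch) (some (vb, Face.frown)) r)
  | g => fbG L g

lemma pick1_shape (p : S × S) (ch : A × S) :
    ∃ rb, pick1 L σb p ch = BConf.dup p (some ch) rb := by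
  unfold pick1; split
  · exact ⟨.star, rfl⟩
  · exact ⟨.check, rfl⟩

lemma pick1_wb {p : S × S} {ch : A × S} {r0 : Rw}
    (h : Wb L σb (.dup p (some ch) r0)) : Wb L σb (pick1 L σb p ch) := by
  unfold pick1; split
  · assumption
  · cases r0 with
    | star => exact absurd h (by assumption)
    | check => exact h

lemma bb_sp_not_owned (p : S × S) (c : Option (A × S)) (r : Rw) :
    ¬ BConf.dupOwned (BConf.sp p c r) := fun h => h

lemma gb_sp_not_owned (p : S × S) (c : Option (A × S)) (m : Option (S × Face))
    (r : Rw) : ¬ GConf.dupOwned (GConf.sp p c m r) := fun h => h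

/-- Key mirroring lemma: unpack Duplicator's bb answer at the picked bb
configuration into a legal gb answer. -/
lemma dir1_mirror (hv : ValidStrategy BConf.dupOwned (BMove L) σb)
    {u vb : S} {a : A} {u' : S} {rb : Rw}
    (hw : Wb L σb (.dup (u, vb) (some (a, u')) rb)) (v : S) (r : Rw) :
    BMove L (.dup (u, vb) (some (a, u')) rb) (σb (.dup (u, vb) (some (a, u')) rb)) ∧
    Wb L σb (σb (.dup (u, vb) (some (a, u')) rb)) ∧
    GMove L (∅ : Set Face) Rw.check (.dup (u, v) (some (a, u')) (some (vb, .frown)) r)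
      (gmir (.dup (u, v) (some (a, u')) (some (vb, .frown)) r)
        (σb (.dup (u, vb) (some (a, u')) rb))) ∧
    ((∃ q, σb (.dup (u, vb) (some (a, u')) rb) = .sp q none .check ∧
        gmir (.dup (u, v) (some (a, u')) (some (vb, .frown)) r)
          (σb (.dup (u, vb) (some (a, u')) rb)) = .sp q none none .check) ∨
     (∃ v₂, σb (.dup (u, vb) (some (a, u')) rb) = .sp (u, v₂) (some (a, u')) .star ∧
        gmir (.dup (u, v) (some (a, u')) (some (vb, .frown)) r)
          (σb (.dup (u, vb) (some (a, u')) rb)) =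
          .sp (u, v₂) (some (a, u')) (some (v₂, .frown)) .star)) := by
  have hbm : BMove L (.dup (u, vb) (some (a, u')) rb)
      (σb (.dup (u, vb) (some (a, u')) rb)) :=
    hv _ trivial (winsFrom_hasMove hw trivial)
  have hwb' : Wb L σb (σb (.dup (u, vb) (some (a, u')) rb)) :=
    (winsFrom_valid hw hv trivial).2
  refine ⟨hbm, hwb', ?_⟩
  generalize ht : σb (.dup (u, vb) (some (a, u')) rb) = tt at hbm ⊢
  cases hbm with
  | dup1 =>
    exact ⟨GMove.dup1, Or.inl ⟨_, rfl, rfl⟩⟩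
  | dup2 h =>
    exact ⟨GMove.dup2b h, Or.inl ⟨_, rfl, rfl⟩⟩
  | dup3 h =>
    exact ⟨GMove.dup3a h, Or.inr ⟨_, rfl, rfl⟩⟩

lemma valid_sigG (hv : ValidStrategy BConf.dupOwned (BMove L) σb) :
    ValidStrategy GConf.dupOwned (GMove L (∅ : Set Face) Rw.check) (sigG L σb) := by
  intro g ho hex
  match g with
  | .sp p c m r => exact False.elim ho
  | .dup p none m r =>
    show GMove L _ _ _ (fbG L _)
    unfold fbG; rw [dif_pos hex]; exact hex.choose_spec
  | .dup p (some ch) none r =>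
    show GMove L _ _ _ (fbG L _)
    unfold fbG; rw [dif_pos hex]; exact hex.choose_spec
  | .dup p (some ch) (some (vb, Face.smile)) r =>
    show GMove L _ _ _ (fbG L _)
    unfold fbG; rw [dif_pos hex]; exact hex.choose_spec
  | .dup (pu, pv) (some (a, u')) (some (vb, Face.frown)) r =>
    show GMove L _ _ _ (if Wb L σb (pick1 L σb (pu, vb) (a, u')) then _ else _)
    split
    · next hwp =>
      obtain ⟨rb, hrb⟩ := pick1_shape L σb (pu, vb) (a, u')
      rw [hrb] at hwp ⊢
      exact (dir1_mirror L σb hv hwp pv r).2.2.1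
    · next =>
      show GMove L _ _ _ (fbG L _)
      unfold fbG; rw [dif_pos hex]; exact hex.choose_spec

/-- The simulation invariant for direction 1. -/
def Inv1 (g : GConf S A) (b : BConf S A) : Prop :=
  (∃ p r r', g = .sp p none none r ∧ b = .sp p none r' ∧ Wb L σb b)
  ∨ (∃ p a u' r r', g = .sp p (some (a, u')) (some (p.2, .frown)) r ∧
       b = .sp p (some (a, u')) r' ∧ Wb L σb b ∧ L.Trans p.1 a u')
  ∨ (∃ p a u' r, g = .dup p (some (a, u')) (some (p.2, .frown)) r ∧
       b = pick1 L σb p (a, u') ∧ Wb L σb b ∧ L.Trans p.1 a u')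

def rank1 : GConf S A → BConf S A → ℕ := fun _ b =>
  match b with
  | .dup _ _ Rw.check => 1
  | _ => 0

end Dir1


section Dir1Proof

variable {S : Type u} {A : Type v} (L : LTS S A) (σb : BConf S A → BConf S A)

lemma dir1_hW : ∀ g b, Inv1 L σb g b →
    WinsFrom BConf.dupOwned (BMove L) (BuchiWin BConf.reward) σb b := by
  intro g b h
  rcases h with ⟨p, r, r', _, _, hw⟩ | ⟨p, a, u', r, r', _, _, hw, _⟩ |
    ⟨p, a, u', r, _, _, hw, _⟩ <;> exact hw

lemma dir1_H1 : ∀ g b, Inv1 L σb g b → GConf.dupOwned g →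
    ∃ d, GMove L (∅ : Set Face) Rw.check g d := by
  intro g b h ho
  rcases h with ⟨p, r, r', hg, _, _⟩ | ⟨p, a, u', r, r', hg, _, _, _⟩ |
    ⟨⟨pu, pv⟩, a, u', r, hg, hb, hw, _⟩
  · rw [hg] at ho; exact False.elim ho
  · rw [hg] at ho; exact False.elim ho
  · obtain ⟨rb, hrb⟩ := pick1_shape L σb (pu, pv) (a, u')
    rw [hb, hrb] at hw
    obtain ⟨e, he⟩ := winsFrom_hasMove hw trivial
    rw [hg]
    cases he with
    | dup1 => exact ⟨_, GMove.dup1⟩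
    | dup2 h => exact ⟨_, GMove.dup2b h⟩
    | dup3 h => exact ⟨_, GMove.dup3a h⟩

lemma dir1_H2 (hv : ValidStrategy BConf.dupOwned (BMove L) σb) :
    ∀ g b d, Inv1 L σb g b → GMove L (∅ : Set Face) Rw.check g d →
      (GConf.dupOwned g → d = sigG L σb g) →
      ∃ b', Inv1 L σb d b' ∧
        ((BMove L b b' ∧ (BConf.dupOwned b → b' = σb b) ∧
            (BConf.reward b' → GConf.reward d)) ∨
          rank1 d b' < rank1 g b ∨ GConf.reward d) ∧
        (¬ GConf.reward d → rank1 d b' ≤ rank1 g b) := by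
  intro g b d hinv hmv hcons
  rcases hinv with ⟨⟨pu, pv⟩, r, r', hg, hb, hw⟩ |
    ⟨⟨pu, pv⟩, a, u', r, r', hg, hb, hw, htr⟩ |
    ⟨⟨pu, pv⟩, a, u', r, hg, hb, hw, htr⟩
  · -- mode A
    subst hg; subst hb
    cases hmv with
    | sp1 hc => exact absurd rfl hc
    | sp2a h =>
      rename_i a0 s0
      have hbm : BMove L (.sp (pu, pv) none r') (.dup (pu, pv) (some (a0, s0)) .star) :=
        BMove.sp1star h (Or.inr rfl)
      have hw' : Wb L σb (.dup (pu, pv) (some (a0, s0)) .star) :=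
        winsFrom_step hw hbm (fun hf => False.elim hf)
      refine ⟨.dup (pu, pv) (some (a0, s0)) .star,
        Or.inr (Or.inr ⟨(pu, pv), a0, s0, .star, rfl, ?_, hw', h⟩),
        Or.inl ⟨hbm, fun hf => False.elim hf, fun hr => absurd (show Rw.star = Rw.check from hr) (by decide)⟩,
        fun _ => by simp [rank1]⟩
      unfold pick1; rw [if_pos hw']
    | sp2b h hc =>
      rename_i a0 s0
      have hbm : BMove L (.sp (pu, pv) none r') (.dup (pu, pv) (some (a0, s0)) .star) :=
        BMove.sp1star h (Or.inr rfl)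
      have hw' : Wb L σb (.dup (pu, pv) (some (a0, s0)) .star) :=
        winsFrom_step hw hbm (fun hf => False.elim hf)
      refine ⟨.dup (pu, pv) (some (a0, s0)) .star,
        Or.inr (Or.inr ⟨(pu, pv), a0, s0, .check, rfl, ?_, hw', h⟩),
        Or.inr (Or.inr rfl), fun hnr => absurd rfl hnr⟩
      unfold pick1; rw [if_pos hw']
    | sp3 h =>
      rename_i a0 t0
      have hbm : BMove L (.sp (pu, pv) none r') (.dup (pv, pu) (some (a0, t0)) .check) :=
        BMove.sp2 h
      have hw' : Wb L σb (.dup (pv, pu) (some (a0, t0)) .check) :=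
        winsFrom_step hw hbm (fun hf => False.elim hf)
      exact ⟨pick1 L σb (pv, pu) (a0, t0),
        Or.inr (Or.inr ⟨(pv, pu), a0, t0, .check, rfl, rfl, pick1_wb L σb hw', h⟩),
        Or.inr (Or.inr rfl), fun hnr => absurd rfl hnr⟩
  · -- mode B (pending challenge, frown)
    subst hg; subst hb
    cases hmv with
    | sp1 hc =>
      have hbm : BMove L (.sp (pu, pv) (some (a, u')) r')
          (.dup (pu, pv) (some (a, u')) .star) := BMove.sp1star htr (Or.inl rfl)
      have hw' : Wb L σb (.dup (pu, pv) (some (a, u')) .star) :=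
        winsFrom_step hw hbm (fun hf => False.elim hf)
      refine ⟨.dup (pu, pv) (some (a, u')) .star,
        Or.inr (Or.inr ⟨(pu, pv), a, u', .star, rfl, ?_, hw', htr⟩),
        Or.inl ⟨hbm, fun hf => False.elim hf, fun hr => absurd (show Rw.star = Rw.check from hr) (by decide)⟩,
        fun _ => by simp [rank1]⟩
      unfold pick1; rw [if_pos hw']
    | sp2b h hc =>
      rename_i a0 s0
      have hbm : BMove L (.sp (pu, pv) (some (a, u')) r')
          (.dup (pu, pv) (some (a0, s0)) .check) :=
        BMove.sp1check h (fun hor => by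
          rcases hor with h1 | h1
          · exact hc h1
          · cases h1)
      have hw' : Wb L σb (.dup (pu, pv) (some (a0, s0)) .check) :=
        winsFrom_step hw hbm (fun hf => False.elim hf)
      exact ⟨pick1 L σb (pu, pv) (a0, s0),
        Or.inr (Or.inr ⟨(pu, pv), a0, s0, .check, rfl, rfl, pick1_wb L σb hw', h⟩),
        Or.inr (Or.inr rfl), fun hnr => absurd rfl hnr⟩
    | sp3 h =>
      rename_i a0 t0
      have hbm : BMove L (.sp (pu, pv) (some (a, u')) r')
          (.dup (pv, pu) (some (a0, t0)) .check) := BMove.sp2 h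
      have hw' : Wb L σb (.dup (pv, pu) (some (a0, t0)) .check) :=
        winsFrom_step hw hbm (fun hf => False.elim hf)
      exact ⟨pick1 L σb (pv, pu) (a0, t0),
        Or.inr (Or.inr ⟨(pv, pu), a0, t0, .check, rfl, rfl, pick1_wb L σb hw', h⟩),
        Or.inr (Or.inr rfl), fun hnr => absurd rfl hnr⟩
  · -- mode Dup
    have hd : d = sigG L σb (.dup (pu, pv) (some (a, u')) (some (pv, .frown)) r) := by
      rw [← hg]; exact hcons (by rw [hg]; exact trivial)
    rw [hb] at hw
    have hsig : sigG L σb (.dup (pu, pv) (some (a, u')) (some (pv, .frown)) r) =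
        if Wb L σb (pick1 L σb (pu, pv) (a, u')) then
          gmir (.dup (pu, pv) (some (a, u')) (some (pv, .frown)) r)
            (σb (pick1 L σb (pu, pv) (a, u')))
        else fbG L (.dup (pu, pv) (some (a, u')) (some (pv, .frown)) r) := rfl
    rw [hsig, if_pos hw] at hd
    obtain ⟨rb, hrb⟩ := pick1_shape L σb (pu, pv) (a, u')
    rw [hrb] at hw hd
    obtain ⟨hbm, hwb', hgm, hdisj⟩ := dir1_mirror L σb hv hw pv r
    refine ⟨σb (.dup (pu, pv) (some (a, u')) rb), ?_, ?_, ?_⟩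
    · rcases hdisj with ⟨q, ht, hgmir⟩ | ⟨v₂, ht, hgmir⟩
      · exact Or.inl ⟨q, .check, .check, by rw [hd, hgmir], ht, hwb'⟩
      · exact Or.inr (Or.inl ⟨(pu, v₂), a, u', .star, .star, by rw [hd, hgmir],
          ht, hwb', htr⟩)
    · refine Or.inl ⟨by rw [hb, hrb]; exact hbm, fun _ => by rw [hb, hrb], ?_⟩
      rcases hdisj with ⟨q, ht, hgmir⟩ | ⟨v₂, ht, hgmir⟩
      · intro _; rw [hd, hgmir]; exact rfl
      · intro hr; rw [ht] at hr; exact absurd (show Rw.star = Rw.check from hr) (by decide)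
    · intro _
      rcases hdisj with ⟨q, ht, hgmir⟩ | ⟨v₂, ht, hgmir⟩ <;> rw [ht] <;> simp [rank1]

theorem dir1_main {s t : S} (h : L.bbEquiv s t) : L.gbEquiv (∅ : Set Face) s t := by
  obtain ⟨σb, hv, hwin⟩ := h
  refine ⟨sigG L σb, valid_sigG L σb hv, ?_⟩
  have h0 : Inv1 L σb (.sp (s, t) none none .star) (.sp (s, t) none .star) :=
    Or.inl ⟨(s, t), .star, .star, rfl, rfl, hwin⟩
  exact transfer BConf.dupOwned (BMove L) BConf.reward σb GConf.dupOwned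
    (GMove L (∅ : Set Face) Rw.check) GConf.reward (sigG L σb) (Inv1 L σb) rank1
    (dir1_hW L σb) (dir1_H1 L σb) (dir1_H2 L σb hv) h0

end Dir1Proof


/-! ## Direction 2: a winning Duplicator strategy in the `∅`-generic game yields
one in the bb game. -/

section Dir2

variable {S : Type u} {A : Type v} (L : LTS S A) (σg : GConf S A → GConf S A)

/-- Duplicator wins the `∅`-generic game from `g` using `σg`. -/
def Wg (g : GConf S A) : Prop :=
  WinsFrom GConf.dupOwned (GMove L (∅ : Set Face) Rw.check)
    (BuchiWin GConf.reward) σg g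

/-- Frowny Duplicator configuration paired with a bb Duplicator configuration. -/
abbrev Fr (p : S × S) (ch : A × S) (r : Rw) : GConf S A :=
  .dup p (some ch) (some (p.2, .frown)) r

/-- Smiley Duplicator configuration paired with a bb Duplicator configuration. -/
abbrev Sm (p : S × S) (ch : A × S) : GConf S A :=
  .dup p (some ch) (some (p.2, .smile)) .star

/-- Mirror a gb move target (answering from a frowny configuration) back to a
bb move target. -/
def bbmirF (t : GConf S A) (dflt : BConf S A) : BConf S A :=
  match t with
  | .sp q none none _ => .sp q none .check
  | .sp q (some ch') (some (_, .frown)) _ => .sp q (some ch') .star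
  | .sp q (some _) (some (_, .smile)) _ => .sp q none .check
  | _ => dflt

/-- Mirror a gb move target (answering from a smiley configuration) back to a
bb move target. -/
noncomputable def bbmirS (u : S) (a : A) (u' : S) (v : S) (t : GConf S A)
    (dflt : BConf S A) : BConf S A :=
  match t with
  | .sp q none none _ =>
      if a = L.tau ∧ q.2 = v then .sp (u', v) none .check
      else .sp (u, q.2) (some (a, u')) .star
  | .sp q (some ch') (some _) _ => .sp q (some ch') .star
  | _ => dflt

noncomputable def fbB (c : BConf S A) : BConf S A :=
  if h : ∃ d, BMove L c d then h.choose else c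

/-- The constructed bb strategy. -/
noncomputable def sigB : BConf S A → BConf S A := fun c =>
  match c with
  | .dup p (some ch) r =>
      if Wg L σg (Fr p ch .star) then
        bbmirF (σg (Fr p ch .star)) (fbB L (.dup p (some ch) r))
      else if Wg L σg (Fr p ch .check) then
        bbmirF (σg (Fr p ch .check)) (fbB L (.dup p (some ch) r))
      else if Wg L σg (Sm p ch) then
        bbmirS L p.1 ch.1 ch.2 p.2 (σg (Sm p ch)) (fbB L (.dup p (some ch) r))
      else fbB L (.dup p (some ch) r)
  | c => fbB L c

lemma dir2_mirrorF (hv : ValidStrategy GConf.dupOwned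
      (GMove L (∅ : Set Face) Rw.check) σg)
    {pu pv : S} {a : A} {u' : S} {r2 : Rw}
    (hw : Wg L σg (.dup (pu, pv) (some (a, u')) (some (pv, .frown)) r2))
    (r : Rw) (dflt : BConf S A) :
    GMove L (∅ : Set Face) Rw.check
      (.dup (pu, pv) (some (a, u')) (some (pv, .frown)) r2)
      (σg (.dup (pu, pv) (some (a, u')) (some (pv, .frown)) r2)) ∧
    Wg L σg (σg (.dup (pu, pv) (some (a, u')) (some (pv, .frown)) r2)) ∧
    (BMove L (.dup (pu, pv) (some (a, u')) r)
      (bbmirF (σg (.dup (pu, pv) (some (a, u')) (some (pv, .frown)) r2)) dflt) ∧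
    ((∃ q, σg (.dup (pu, pv) (some (a, u')) (some (pv, .frown)) r2) =
          .sp q none none .check ∧
        bbmirF (σg (.dup (pu, pv) (some (a, u')) (some (pv, .frown)) r2)) dflt =
          .sp q none .check) ∨
     (∃ v₂, σg (.dup (pu, pv) (some (a, u')) (some (pv, .frown)) r2) =
          .sp (u', v₂) (some (a, u')) (some (v₂, .smile)) .star ∧
        bbmirF (σg (.dup (pu, pv) (some (a, u')) (some (pv, .frown)) r2)) dflt =
          .sp (u', v₂) none .check) ∨
     (∃ v₂, σg (.dup (pu, pv) (some (a, u')) (some (pv, .frown)) r2) =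
          .sp (pu, v₂) (some (a, u')) (some (v₂, .frown)) .star ∧
        bbmirF (σg (.dup (pu, pv) (some (a, u')) (some (pv, .frown)) r2)) dflt =
          .sp (pu, v₂) (some (a, u')) .star))) := by
  have hgm : GMove L (∅ : Set Face) Rw.check
      (.dup (pu, pv) (some (a, u')) (some (pv, .frown)) r2)
      (σg (.dup (pu, pv) (some (a, u')) (some (pv, .frown)) r2)) :=
    hv _ trivial (winsFrom_hasMove hw trivial)
  have hwt : Wg L σg (σg (.dup (pu, pv) (some (a, u')) (some (pv, .frown)) r2)) :=
    (winsFrom_valid hw hv trivial).2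
  refine ⟨hgm, hwt, ?_⟩
  generalize ht : σg (.dup (pu, pv) (some (a, u')) (some (pv, .frown)) r2) = tt
    at hgm ⊢
  cases hgm with
  | dup1 => exact ⟨BMove.dup1, Or.inl ⟨_, rfl, rfl⟩⟩
  | dup2a h => exact ⟨BMove.dup2 h, Or.inr (Or.inl ⟨_, rfl, rfl⟩)⟩
  | dup2b h => exact ⟨BMove.dup2 h, Or.inl ⟨_, rfl, rfl⟩⟩
  | dup2c h hE => exact absurd hE (Set.notMem_empty _)
  | dup3a h => exact ⟨BMove.dup3 h, Or.inr (Or.inr ⟨_, rfl, rfl⟩)⟩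
  | dup3c h hE => exact absurd hE (Set.notMem_empty _)

lemma dir2_mirrorS (hv : ValidStrategy GConf.dupOwned
      (GMove L (∅ : Set Face) Rw.check) σg)
    {pu pv : S} {a : A} {u' : S}
    (hw : Wg L σg (.dup (pu, pv) (some (a, u')) (some (pv, .smile)) .star))
    (r : Rw) (dflt : BConf S A) :
    GMove L (∅ : Set Face) Rw.check
      (.dup (pu, pv) (some (a, u')) (some (pv, .smile)) .star)
      (σg (.dup (pu, pv) (some (a, u')) (some (pv, .smile)) .star)) ∧
    Wg L σg (σg (.dup (pu, pv) (some (a, u')) (some (pv, .smile)) .star)) ∧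
    (BMove L (.dup (pu, pv) (some (a, u')) r)
      (bbmirS L pu a u' pv
        (σg (.dup (pu, pv) (some (a, u')) (some (pv, .smile)) .star)) dflt) ∧
    ((∃ q, σg (.dup (pu, pv) (some (a, u')) (some (pv, .smile)) .star) =
          .sp q none none .check ∧
        bbmirS L pu a u' pv
          (σg (.dup (pu, pv) (some (a, u')) (some (pv, .smile)) .star)) dflt =
          .sp q none .check) ∨
     (∃ v₂, σg (.dup (pu, pv) (some (a, u')) (some (pv, .smile)) .star) =
          .sp (pu, v₂) (some (a, u')) (some (v₂, .smile)) .star ∧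
        bbmirS L pu a u' pv
          (σg (.dup (pu, pv) (some (a, u')) (some (pv, .smile)) .star)) dflt =
          .sp (pu, v₂) (some (a, u')) .star) ∨
     (∃ v₂, σg (.dup (pu, pv) (some (a, u')) (some (pv, .smile)) .star) =
          .sp (u', v₂) none none .check ∧
        bbmirS L pu a u' pv
          (σg (.dup (pu, pv) (some (a, u')) (some (pv, .smile)) .star)) dflt =
          .sp (pu, v₂) (some (a, u')) .star))) := by
  have hgm : GMove L (∅ : Set Face) Rw.check
      (.dup (pu, pv) (some (a, u')) (some (pv, .smile)) .star)
      (σg (.dup (pu, pv) (some (a, u')) (some (pv, .smile)) .star)) :=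
    hv _ trivial (winsFrom_hasMove hw trivial)
  have hwt : Wg L σg (σg (.dup (pu, pv) (some (a, u')) (some (pv, .smile)) .star)) :=
    (winsFrom_valid hw hv trivial).2
  refine ⟨hgm, hwt, ?_⟩
  generalize ht : σg (.dup (pu, pv) (some (a, u')) (some (pv, .smile)) .star) = tt
    at hgm ⊢
  cases hgm with
  | dup1 =>
    constructor
    · show BMove L _ (if L.tau = L.tau ∧ pv = pv then _ else _)
      rw [if_pos ⟨rfl, rfl⟩]
      exact BMove.dup1
    · refine Or.inl ⟨(u', pv), rfl, ?_⟩
      show (if L.tau = L.tau ∧ pv = pv then _ else _) = _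
      rw [if_pos ⟨rfl, rfl⟩]
  | dup3a h => exact ⟨BMove.dup3 h, Or.inr (Or.inl ⟨_, rfl, rfl⟩)⟩
  | dup3b h =>
    rename_i v₂
    by_cases hc : a = L.tau ∧ v₂ = pv
    · constructor
      · show BMove L _ (if a = L.tau ∧ v₂ = pv then _ else _)
        rw [if_pos hc]
        obtain ⟨h1, h2⟩ := hc
        subst h1
        exact BMove.dup1
      · refine Or.inl ⟨(u', pv), ?_, ?_⟩
        · rw [hc.2]
        · show (if a = L.tau ∧ v₂ = pv then _ else _) = _
          rw [if_pos hc]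
    · constructor
      · show BMove L _ (if a = L.tau ∧ v₂ = pv then _ else _)
        rw [if_neg hc]
        exact BMove.dup3 h
      · refine Or.inr (Or.inr ⟨v₂, rfl, ?_⟩)
        show (if a = L.tau ∧ v₂ = pv then _ else _) = _
        rw [if_neg hc]
  | dup3c h hE => exact absurd hE (Set.notMem_empty _)

end Dir2


section Dir2Proof

variable {S : Type u} {A : Type v} (L : LTS S A) (σg : GConf S A → GConf S A)

lemma valid_sigB (hv : ValidStrategy GConf.dupOwned
      (GMove L (∅ : Set Face) Rw.check) σg) :
    ValidStrategy BConf.dupOwned (BMove L) (sigB L σg) := by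
  intro c ho hex
  match c with
  | .sp p c0 r => exact False.elim ho
  | .dup p none r =>
    show BMove L _ (fbB L _)
    unfold fbB; rw [dif_pos hex]; exact hex.choose_spec
  | .dup (pu, pv) (some (a, u')) r =>
    show BMove L _
      (if Wg L σg (Fr (pu, pv) (a, u') .star) then _ else _)
    split
    · next h1 => exact (dir2_mirrorF L σg hv h1 r _).2.2.1
    · next =>
      show BMove L _
        (if Wg L σg (Fr (pu, pv) (a, u') .check) then _ else _)
      split
      · next h2 => exact (dir2_mirrorF L σg hv h2 r _).2.2.1
      · next =>
        show BMove L _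
          (if Wg L σg (Sm (pu, pv) (a, u')) then _ else _)
        split
        · next h3 => exact (dir2_mirrorS L σg hv h3 r _).2.2.1
        · next =>
          show BMove L _ (fbB L _)
          unfold fbB; rw [dif_pos hex]; exact hex.choose_spec

/-- The simulation invariant for direction 2 (modes A, B, C, D, E, Dup). -/
def Inv2 (c : BConf S A) (g : GConf S A) : Prop :=
  (∃ p r r', c = .sp p none r ∧ g = .sp p none none r' ∧ Wg L σg g) ∨
  (∃ p ch r r', c = .sp p (some ch) r ∧
     g = .sp p (some ch) (some (p.2, .frown)) r' ∧ Wg L σg g) ∨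
  (∃ p ch r r', c = .sp p (some ch) r ∧
     g = .sp p (some ch) (some (p.2, .smile)) r' ∧ Wg L σg g ∧ ch.2 = p.1) ∨
  (∃ p ch r r', c = .sp p (some ch) r ∧ g = .sp p none none r' ∧ Wg L σg g) ∨
  (∃ p ch r r', c = .sp p none r ∧
     g = .sp p (some ch) (some (p.2, .smile)) r' ∧ Wg L σg g ∧ ch.2 = p.1) ∨
  (∃ p ch r, c = .dup p (some ch) r ∧
    ((g = Fr p ch .star ∧ Wg L σg g) ∨
     (¬ Wg L σg (Fr p ch .star) ∧ g = Fr p ch .check ∧ Wg L σg g) ∨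
     (¬ Wg L σg (Fr p ch .star) ∧ ¬ Wg L σg (Fr p ch .check) ∧
       g = Sm p ch ∧ Wg L σg g ∧ ch.2 = p.1)))

def rank2 : BConf S A → GConf S A → ℕ := fun c g =>
  match g, c with
  | .sp _ _ (some (_, Face.smile)) _, .sp _ none _ => 3
  | .sp _ _ (some (_, Face.smile)) _, _ => 2
  | .dup _ _ (some (_, Face.smile)) _, _ => 2
  | .sp _ none none _, .sp _ (some _) _ => 1
  | _, _ => 0

/-- Establishing the Dup-mode invariant upon arrival at a bb Duplicator
configuration paired with gb configuration `t`. -/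
lemma dir2_arrive (p : S × S) (ch : A × S) (r : Rw) {t : GConf S A}
    (htw : Wg L σg t)
    (ht : t = Fr p ch .star ∨ t = Fr p ch .check ∨ (t = Sm p ch ∧ ch.2 = p.1)) :
    ∃ g', Inv2 L σg (.dup p (some ch) r) g' ∧
      ((∃ r2, g' = Fr p ch r2) ∨ g' = Sm p ch) ∧
      (t = Fr p ch .star → g' = t) ∧
      ((t = Sm p ch ∧ ¬ Wg L σg (Fr p ch .star) ∧ ¬ Wg L σg (Fr p ch .check)) →
        g' = t) := by
  by_cases h1 : Wg L σg (Fr p ch .star)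
  · refine ⟨Fr p ch .star,
      Or.inr (Or.inr (Or.inr (Or.inr (Or.inr ⟨p, ch, r, rfl, Or.inl ⟨rfl, h1⟩⟩)))),
      Or.inl ⟨.star, rfl⟩, fun h => h.symm, fun h => absurd h1 h.2.1⟩
  · by_cases h2 : Wg L σg (Fr p ch .check)
    · refine ⟨Fr p ch .check,
        Or.inr (Or.inr (Or.inr (Or.inr (Or.inr ⟨p, ch, r, rfl,
          Or.inr (Or.inl ⟨h1, rfl, h2⟩)⟩)))),
        Or.inl ⟨.check, rfl⟩, fun h => absurd (h ▸ htw) h1,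
        fun h => absurd h2 h.2.2⟩
    · rcases ht with h | h | ⟨h, hsh⟩
      · exact absurd (h ▸ htw) h1
      · exact absurd (h ▸ htw) h2
      · refine ⟨Sm p ch,
          Or.inr (Or.inr (Or.inr (Or.inr (Or.inr ⟨p, ch, r, rfl,
            Or.inr (Or.inr ⟨h1, h2, rfl, h ▸ htw, hsh⟩)⟩)))),
          Or.inr rfl, fun hts => ?_, fun _ => h.symm⟩
        rw [hts] at h
        simp [Fr, Sm] at h

lemma dir2_hW : ∀ c g, Inv2 L σg c g →
    WinsFrom GConf.dupOwned (GMove L (∅ : Set Face) Rw.check)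
      (BuchiWin GConf.reward) σg g := by
  intro c g h
  rcases h with ⟨p, r, r', _, _, hw⟩ | ⟨p, ch, r, r', _, _, hw⟩ |
    ⟨p, ch, r, r', _, _, hw, _⟩ | ⟨p, ch, r, r', _, _, hw⟩ |
    ⟨p, ch, r, r', _, _, hw, _⟩ | ⟨p, ch, r, _, hbr⟩
  · exact hw
  · exact hw
  · exact hw
  · exact hw
  · exact hw
  · rcases hbr with ⟨_, hw⟩ | ⟨_, _, hw⟩ | ⟨_, _, _, hw, _⟩ <;> exact hw

lemma dir2_H1 : ∀ c g, Inv2 L σg c g → BConf.dupOwned c →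
    ∃ d, BMove L c d := by
  intro c g h ho
  rcases h with ⟨p, r, r', hc, _, _⟩ | ⟨p, ch, r, r', hc, _, _⟩ |
    ⟨p, ch, r, r', hc, _, _, _⟩ | ⟨p, ch, r, r', hc, _, _⟩ |
    ⟨p, ch, r, r', hc, _, _, _⟩ | ⟨⟨pu, pv⟩, ⟨ca, cs⟩, r, hc, hbr⟩
  · rw [hc] at ho; exact False.elim ho
  · rw [hc] at ho; exact False.elim ho
  · rw [hc] at ho; exact False.elim ho
  · rw [hc] at ho; exact False.elim ho
  · rw [hc] at ho; exact False.elim ho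
  · subst hc
    have hfr : ∀ r2, Wg L σg (Fr (pu, pv) (ca, cs) r2) → ∃ d, BMove L
        (.dup (pu, pv) (some (ca, cs)) r) d := by
      intro r2 hw
      obtain ⟨e, he⟩ := winsFrom_hasMove hw trivial
      cases he with
      | dup1 => exact ⟨_, BMove.dup1⟩
      | dup2a h => exact ⟨_, BMove.dup2 h⟩
      | dup2b h => exact ⟨_, BMove.dup2 h⟩
      | dup2c h hE => exact absurd hE (Set.notMem_empty _)
      | dup3a h => exact ⟨_, BMove.dup3 h⟩
      | dup3c h hE => exact absurd hE (Set.notMem_empty _)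
    rcases hbr with ⟨hg, hw⟩ | ⟨_, hg, hw⟩ | ⟨_, _, hg, hw, _⟩
    · exact hfr .star (hg ▸ hw)
    · exact hfr .check (hg ▸ hw)
    · rw [hg] at hw
      obtain ⟨e, he⟩ := winsFrom_hasMove hw trivial
      cases he with
      | dup1 => exact ⟨_, BMove.dup1⟩
      | dup3a h => exact ⟨_, BMove.dup3 h⟩
      | dup3b h => exact ⟨_, BMove.dup3 h⟩
      | dup3c h hE => exact absurd hE (Set.notMem_empty _)

end Dir2Proof


section Dir2H2

variable {S : Type u} {A : Type v} (L : LTS S A) (σg : GConf S A → GConf S A)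

lemma dir2_H2 (hv : ValidStrategy GConf.dupOwned
      (GMove L (∅ : Set Face) Rw.check) σg) :
    ∀ c g d, Inv2 L σg c g → BMove L c d → (BConf.dupOwned c → d = sigB L σg c) →
      ∃ g', Inv2 L σg d g' ∧
        ((GMove L (∅ : Set Face) Rw.check g g' ∧
            (GConf.dupOwned g → g' = σg g) ∧
            (GConf.reward g' → BConf.reward d)) ∨
          rank2 d g' < rank2 c g ∨ BConf.reward d) ∧
        (¬ BConf.reward d → rank2 d g' ≤ rank2 c g) := by
  intro c g d hinv hmv hcons
  rcases hinv with ⟨⟨pu, pv⟩, r, r', hc, hg, hw⟩ |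
    ⟨⟨pu, pv⟩, ch, r, r', hc, hg, hw⟩ |
    ⟨⟨pu, pv⟩, ch, r, r', hc, hg, hw, hsh⟩ |
    ⟨⟨pu, pv⟩, ch, r, r', hc, hg, hw⟩ |
    ⟨⟨pu, pv⟩, ch, r, r', hc, hg, hw, hsh⟩ |
    ⟨⟨pu, pv⟩, ⟨ca, cs⟩, r, hc, hbr⟩
  · -- mode A
    subst hc; subst hg
    cases hmv with
    | sp1star h hc =>
      rename_i a0 s0
      have hmv1 : GMove L (∅ : Set Face) Rw.check
          (.sp (pu, pv) none none r') (Fr (pu, pv) (a0, s0) .star) := GMove.sp2a h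
      have htw := winsFrom_step hw hmv1 (fun hf => False.elim hf)
      obtain ⟨g', hinv', _, hc3, _⟩ :=
        dir2_arrive L σg (pu, pv) (a0, s0) .star htw (Or.inl rfl)
      have hg' : g' = Fr (pu, pv) (a0, s0) .star := hc3 rfl
      refine ⟨g', hinv', Or.inl ⟨by rw [hg']; exact hmv1,
        fun hf => False.elim hf, ?_⟩, fun _ => ?_⟩
      · intro hr; rw [hg'] at hr
        exact absurd (show Rw.star = Rw.check from hr) (by decide)
      · rw [hg']; exact le_refl _
    | sp1check h hc => exact absurd (Or.inr rfl) hc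
    | sp2 h =>
      rename_i a0 t0
      have hmv1 : GMove L (∅ : Set Face) Rw.check
          (.sp (pu, pv) none none r') (Fr (pv, pu) (a0, t0) .check) := GMove.sp3 h
      have htw := winsFrom_step hw hmv1 (fun hf => False.elim hf)
      obtain ⟨g', hinv', _, _, _⟩ :=
        dir2_arrive L σg (pv, pu) (a0, t0) .check htw (Or.inr (Or.inl rfl))
      exact ⟨g', hinv', Or.inr (Or.inr rfl), fun hnr => absurd rfl hnr⟩
  · -- mode B
    subst hc; subst hg
    cases hmv with
    | sp1star h hc =>
      rename_i a0 s0
      rcases hc with hc | hc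
      · have hch := Option.some.inj hc
        subst hch
        have hmv1 : GMove L (∅ : Set Face) Rw.check
            (.sp (pu, pv) (some (a0, s0)) (some (pv, .frown)) r')
            (Fr (pu, pv) (a0, s0) .star) :=
          GMove.sp1 (fun he => nomatch he)
        have htw := winsFrom_step hw hmv1 (fun hf => False.elim hf)
        obtain ⟨g', hinv', _, hc3, _⟩ :=
          dir2_arrive L σg (pu, pv) (a0, s0) .star htw (Or.inl rfl)
        have hg' : g' = Fr (pu, pv) (a0, s0) .star := hc3 rfl
        refine ⟨g', hinv', Or.inl ⟨by rw [hg']; exact hmv1,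
          fun hf => False.elim hf, ?_⟩, fun _ => ?_⟩
        · intro hr; rw [hg'] at hr
          exact absurd (show Rw.star = Rw.check from hr) (by decide)
        · rw [hg']; exact le_refl _
      · exact nomatch hc
    | sp1check h hc =>
      rename_i a0 s0
      have hmv1 : GMove L (∅ : Set Face) Rw.check
          (.sp (pu, pv) (some ch) (some (pv, .frown)) r')
          (Fr (pu, pv) (a0, s0) .check) :=
        GMove.sp2b h (fun he => hc (Or.inl he))
      have htw := winsFrom_step hw hmv1 (fun hf => False.elim hf)
      obtain ⟨g', hinv', _, _, _⟩ :=
        dir2_arrive L σg (pu, pv) (a0, s0) .check htw (Or.inr (Or.inl rfl))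
      exact ⟨g', hinv', Or.inr (Or.inr rfl), fun hnr => absurd rfl hnr⟩
    | sp2 h =>
      rename_i a0 t0
      have hmv1 : GMove L (∅ : Set Face) Rw.check
          (.sp (pu, pv) (some ch) (some (pv, .frown)) r')
          (Fr (pv, pu) (a0, t0) .check) := GMove.sp3 h
      have htw := winsFrom_step hw hmv1 (fun hf => False.elim hf)
      obtain ⟨g', hinv', _, _, _⟩ :=
        dir2_arrive L σg (pv, pu) (a0, t0) .check htw (Or.inr (Or.inl rfl))
      exact ⟨g', hinv', Or.inr (Or.inr rfl), fun hnr => absurd rfl hnr⟩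
  · -- mode C
    subst hc; subst hg
    cases hmv with
    | sp1star h hc =>
      rename_i a0 s0
      rcases hc with hc | hc
      · have hch := Option.some.inj hc
        subst hch
        have hmv1 : GMove L (∅ : Set Face) Rw.check
            (.sp (pu, pv) (some (a0, s0)) (some (pv, .smile)) r')
            (Sm (pu, pv) (a0, s0)) :=
          GMove.sp1 (fun he => nomatch he)
        have htw := winsFrom_step hw hmv1 (fun hf => False.elim hf)
        obtain ⟨g', hinv', hshape, _, _⟩ :=
          dir2_arrive L σg (pu, pv) (a0, s0) .star htw (Or.inr (Or.inr ⟨rfl, hsh⟩))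
        rcases hshape with ⟨r2, hg'⟩ | hg'
        · exact ⟨g', hinv',
            Or.inr (Or.inl (by rw [hg']; exact (show (0:ℕ) < 2 by omega))),
            fun _ => by rw [hg']; exact (show (0:ℕ) ≤ 2 by omega)⟩
        · refine ⟨g', hinv', Or.inl ⟨by rw [hg']; exact hmv1,
            fun hf => False.elim hf, ?_⟩,
            fun _ => by rw [hg']; exact (show (2:ℕ) ≤ 2 by omega)⟩
          intro hr; rw [hg'] at hr
          exact absurd (show Rw.star = Rw.check from hr) (by decide)
      · exact nomatch hc
    | sp1check h hc =>
      rename_i a0 s0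
      have hmv1 : GMove L (∅ : Set Face) Rw.check
          (.sp (pu, pv) (some ch) (some (pv, .smile)) r')
          (Fr (pu, pv) (a0, s0) .check) :=
        GMove.sp2b h (fun he => hc (Or.inl he))
      have htw := winsFrom_step hw hmv1 (fun hf => False.elim hf)
      obtain ⟨g', hinv', _, _, _⟩ :=
        dir2_arrive L σg (pu, pv) (a0, s0) .check htw (Or.inr (Or.inl rfl))
      exact ⟨g', hinv', Or.inr (Or.inr rfl), fun hnr => absurd rfl hnr⟩
    | sp2 h =>
      rename_i a0 t0
      have hmv1 : GMove L (∅ : Set Face) Rw.check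
          (.sp (pu, pv) (some ch) (some (pv, .smile)) r')
          (Fr (pv, pu) (a0, t0) .check) := GMove.sp3 h
      have htw := winsFrom_step hw hmv1 (fun hf => False.elim hf)
      obtain ⟨g', hinv', _, _, _⟩ :=
        dir2_arrive L σg (pv, pu) (a0, t0) .check htw (Or.inr (Or.inl rfl))
      exact ⟨g', hinv', Or.inr (Or.inr rfl), fun hnr => absurd rfl hnr⟩
  · -- mode D
    subst hc; subst hg
    cases hmv with
    | sp1star h hc =>
      rename_i a0 s0
      rcases hc with hc | hc
      · have hch := Option.some.inj hc
        subst hch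
        have hmv1 : GMove L (∅ : Set Face) Rw.check
            (.sp (pu, pv) none none r') (Fr (pu, pv) (a0, s0) .star) :=
          GMove.sp2a h
        have htw := winsFrom_step hw hmv1 (fun hf => False.elim hf)
        obtain ⟨g', hinv', _, hc3, _⟩ :=
          dir2_arrive L σg (pu, pv) (a0, s0) .star htw (Or.inl rfl)
        have hg' : g' = Fr (pu, pv) (a0, s0) .star := hc3 rfl
        refine ⟨g', hinv', Or.inl ⟨by rw [hg']; exact hmv1,
          fun hf => False.elim hf, ?_⟩,
          fun _ => by rw [hg']; exact (show (0:ℕ) ≤ 1 by omega)⟩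
        intro hr; rw [hg'] at hr
        exact absurd (show Rw.star = Rw.check from hr) (by decide)
      · exact nomatch hc
    | sp1check h hc =>
      rename_i a0 s0
      have hmv1 : GMove L (∅ : Set Face) Rw.check
          (.sp (pu, pv) none none r') (Fr (pu, pv) (a0, s0) .check) :=
        GMove.sp2b h (fun he => nomatch he)
      have htw := winsFrom_step hw hmv1 (fun hf => False.elim hf)
      obtain ⟨g', hinv', _, _, _⟩ :=
        dir2_arrive L σg (pu, pv) (a0, s0) .check htw (Or.inr (Or.inl rfl))
      exact ⟨g', hinv', Or.inr (Or.inr rfl), fun hnr => absurd rfl hnr⟩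
    | sp2 h =>
      rename_i a0 t0
      have hmv1 : GMove L (∅ : Set Face) Rw.check
          (.sp (pu, pv) none none r') (Fr (pv, pu) (a0, t0) .check) := GMove.sp3 h
      have htw := winsFrom_step hw hmv1 (fun hf => False.elim hf)
      obtain ⟨g', hinv', _, _, _⟩ :=
        dir2_arrive L σg (pv, pu) (a0, t0) .check htw (Or.inr (Or.inl rfl))
      exact ⟨g', hinv', Or.inr (Or.inr rfl), fun hnr => absurd rfl hnr⟩
  · -- mode E
    subst hc; subst hg
    cases hmv with
    | sp1star h hc =>
      rename_i a0 s0
      by_cases heq : ch = (a0, s0)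
      · subst heq
        have hmv1 : GMove L (∅ : Set Face) Rw.check
            (.sp (pu, pv) (some (a0, s0)) (some (pv, .smile)) r')
            (Sm (pu, pv) (a0, s0)) :=
          GMove.sp1 (fun he => nomatch he)
        have htw := winsFrom_step hw hmv1 (fun hf => False.elim hf)
        obtain ⟨g', hinv', hshape, _, _⟩ :=
          dir2_arrive L σg (pu, pv) (a0, s0) .star htw (Or.inr (Or.inr ⟨rfl, hsh⟩))
        rcases hshape with ⟨r2, hg'⟩ | hg'
        · exact ⟨g', hinv',
            Or.inr (Or.inl (by rw [hg']; exact (show (0:ℕ) < 3 by omega))),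
            fun _ => by rw [hg']; exact (show (0:ℕ) ≤ 3 by omega)⟩
        · exact ⟨g', hinv',
            Or.inr (Or.inl (by rw [hg']; exact (show (2:ℕ) < 3 by omega))),
            fun _ => by rw [hg']; exact (show (2:ℕ) ≤ 3 by omega)⟩
      · have hmv1 : GMove L (∅ : Set Face) Rw.check
            (.sp (pu, pv) (some ch) (some (pv, .smile)) r')
            (Fr (pu, pv) (a0, s0) .check) :=
          GMove.sp2b h (fun he => heq (Option.some.inj he))
        have htw := winsFrom_step hw hmv1 (fun hf => False.elim hf)
        obtain ⟨g', hinv', hshape, _, _⟩ :=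
          dir2_arrive L σg (pu, pv) (a0, s0) .star htw (Or.inr (Or.inl rfl))
        rcases hshape with ⟨r2, hg'⟩ | hg'
        · exact ⟨g', hinv',
            Or.inr (Or.inl (by rw [hg']; exact (show (0:ℕ) < 3 by omega))),
            fun _ => by rw [hg']; exact (show (0:ℕ) ≤ 3 by omega)⟩
        · exact ⟨g', hinv',
            Or.inr (Or.inl (by rw [hg']; exact (show (2:ℕ) < 3 by omega))),
            fun _ => by rw [hg']; exact (show (2:ℕ) ≤ 3 by omega)⟩
    | sp1check h hc => exact absurd (Or.inr rfl) hc
    | sp2 h =>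
      rename_i a0 t0
      have hmv1 : GMove L (∅ : Set Face) Rw.check
          (.sp (pu, pv) (some ch) (some (pv, .smile)) r')
          (Fr (pv, pu) (a0, t0) .check) := GMove.sp3 h
      have htw := winsFrom_step hw hmv1 (fun hf => False.elim hf)
      obtain ⟨g', hinv', _, _, _⟩ :=
        dir2_arrive L σg (pv, pu) (a0, t0) .check htw (Or.inr (Or.inl rfl))
      exact ⟨g', hinv', Or.inr (Or.inr rfl), fun hnr => absurd rfl hnr⟩
  · -- mode Dup
    subst hc
    have hsig : sigB L σg (.dup (pu, pv) (some (ca, cs)) r) =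
        if Wg L σg (Fr (pu, pv) (ca, cs) .star) then
          bbmirF (σg (Fr (pu, pv) (ca, cs) .star))
            (fbB L (.dup (pu, pv) (some (ca, cs)) r))
        else if Wg L σg (Fr (pu, pv) (ca, cs) .check) then
          bbmirF (σg (Fr (pu, pv) (ca, cs) .check))
            (fbB L (.dup (pu, pv) (some (ca, cs)) r))
        else if Wg L σg (Sm (pu, pv) (ca, cs)) then
          bbmirS L pu ca cs pv (σg (Sm (pu, pv) (ca, cs)))
            (fbB L (.dup (pu, pv) (some (ca, cs)) r))
        else fbB L (.dup (pu, pv) (some (ca, cs)) r) := rfl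
    have hd0 : d = sigB L σg (.dup (pu, pv) (some (ca, cs)) r) := hcons trivial
    rcases hbr with ⟨hg, hw⟩ | ⟨hn1, hg, hw⟩ | ⟨hn1, hn2, hg, hw, hsh⟩
    · -- pick = Fr star
      have hw' : Wg L σg (Fr (pu, pv) (ca, cs) .star) := hg ▸ hw
      have hd : d = bbmirF (σg (Fr (pu, pv) (ca, cs) .star))
          (fbB L (.dup (pu, pv) (some (ca, cs)) r)) := by
        rw [hd0, hsig, if_pos hw']
      obtain ⟨hgm, hwt, hbm, hdisj⟩ := dir2_mirrorF L σg hv hw' r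
        (fbB L (.dup (pu, pv) (some (ca, cs)) r))
      rcases hdisj with ⟨q, ht, hmir⟩ | ⟨v₂, ht, hmir⟩ | ⟨v₂, ht, hmir⟩
      · rw [hmir] at hd
        refine ⟨_, Or.inl ⟨q, .check, .check, hd, ht, hwt⟩,
          Or.inl ⟨by rw [hg]; exact hgm, fun _ => by rw [hg], fun _ => by rw [hd]; exact rfl⟩,
          fun hnr => absurd (show BConf.reward d by rw [hd]; exact rfl) hnr⟩
      · rw [hmir] at hd
        refine ⟨_, Or.inr (Or.inr (Or.inr (Or.inr (Or.inl
            ⟨(cs, v₂), (ca, cs), .check, .star, hd, ht, hwt, rfl⟩)))),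
          Or.inr (Or.inr (show BConf.reward d by rw [hd]; exact rfl)),
          fun hnr => absurd (show BConf.reward d by rw [hd]; exact rfl) hnr⟩
      · rw [hmir] at hd
        refine ⟨_, Or.inr (Or.inl ⟨(pu, v₂), (ca, cs), .star, .star, hd, ht, hwt⟩),
          Or.inl ⟨by rw [hg]; exact hgm, fun _ => by rw [hg], ?_⟩,
          fun _ => by rw [hd, ht, hg]; exact le_refl _⟩
        intro hr; rw [ht] at hr
        exact absurd (show Rw.star = Rw.check from hr) (by decide)
    · -- pick = Fr check
      have hw' : Wg L σg (Fr (pu, pv) (ca, cs) .check) := hg ▸ hw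
      have hd : d = bbmirF (σg (Fr (pu, pv) (ca, cs) .check))
          (fbB L (.dup (pu, pv) (some (ca, cs)) r)) := by
        rw [hd0, hsig, if_neg hn1, if_pos hw']
      obtain ⟨hgm, hwt, hbm, hdisj⟩ := dir2_mirrorF L σg hv hw' r
        (fbB L (.dup (pu, pv) (some (ca, cs)) r))
      rcases hdisj with ⟨q, ht, hmir⟩ | ⟨v₂, ht, hmir⟩ | ⟨v₂, ht, hmir⟩
      · rw [hmir] at hd
        refine ⟨_, Or.inl ⟨q, .check, .check, hd, ht, hwt⟩,
          Or.inl ⟨by rw [hg]; exact hgm, fun _ => by rw [hg], fun _ => by rw [hd]; exact rfl⟩,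
          fun hnr => absurd (show BConf.reward d by rw [hd]; exact rfl) hnr⟩
      · rw [hmir] at hd
        refine ⟨_, Or.inr (Or.inr (Or.inr (Or.inr (Or.inl
            ⟨(cs, v₂), (ca, cs), .check, .star, hd, ht, hwt, rfl⟩)))),
          Or.inr (Or.inr (show BConf.reward d by rw [hd]; exact rfl)),
          fun hnr => absurd (show BConf.reward d by rw [hd]; exact rfl) hnr⟩
      · rw [hmir] at hd
        refine ⟨_, Or.inr (Or.inl ⟨(pu, v₂), (ca, cs), .star, .star, hd, ht, hwt⟩),
          Or.inl ⟨by rw [hg]; exact hgm, fun _ => by rw [hg], ?_⟩,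
          fun _ => by rw [hd, ht, hg]; exact le_refl _⟩
        intro hr; rw [ht] at hr
        exact absurd (show Rw.star = Rw.check from hr) (by decide)
    · -- pick = Sm
      have hw' : Wg L σg (Sm (pu, pv) (ca, cs)) := hg ▸ hw
      have hsh' : cs = pu := hsh
      have hd : d = bbmirS L pu ca cs pv (σg (Sm (pu, pv) (ca, cs)))
          (fbB L (.dup (pu, pv) (some (ca, cs)) r)) := by
        rw [hd0, hsig, if_neg hn1, if_neg hn2, if_pos hw']
      obtain ⟨hgm, hwt, hbm, hdisj⟩ := dir2_mirrorS L σg hv hw' r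
        (fbB L (.dup (pu, pv) (some (ca, cs)) r))
      rcases hdisj with ⟨q, ht, hmir⟩ | ⟨v₂, ht, hmir⟩ | ⟨v₂, ht, hmir⟩
      · rw [hmir] at hd
        refine ⟨_, Or.inl ⟨q, .check, .check, hd, ht, hwt⟩,
          Or.inl ⟨by rw [hg]; exact hgm, fun _ => by rw [hg], fun _ => by rw [hd]; exact rfl⟩,
          fun hnr => absurd (show BConf.reward d by rw [hd]; exact rfl) hnr⟩
      · rw [hmir] at hd
        refine ⟨_, Or.inr (Or.inr (Or.inl
            ⟨(pu, v₂), (ca, cs), .star, .star, hd, ht, hwt, hsh'⟩)),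
          Or.inl ⟨by rw [hg]; exact hgm, fun _ => by rw [hg], ?_⟩,
          fun _ => by rw [hd, ht, hg]; exact (show (2:ℕ) ≤ 2 by omega)⟩
        intro hr; rw [ht] at hr
        exact absurd (show Rw.star = Rw.check from hr) (by decide)
      · rw [hmir] at hd
        have ht2 : σg (Sm (pu, pv) (ca, cs)) = .sp (pu, v₂) none none .check := by
          rw [ht, hsh']
        refine ⟨_, Or.inr (Or.inr (Or.inr (Or.inl
            ⟨(pu, v₂), (ca, cs), .star, .check, hd, ht2, hwt⟩))),
          Or.inr (Or.inl (by rw [hd, ht2, hg]; exact (show (1:ℕ) < 2 by omega))),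
          fun _ => by rw [hd, ht2, hg]; exact (show (1:ℕ) ≤ 2 by omega)⟩

end Dir2H2


section MainAssembly

variable {S : Type u} {A : Type v} (L : LTS S A)

theorem dir2_main {s t : S} (h : L.gbEquiv (∅ : Set Face) s t) : L.bbEquiv s t := by
  obtain ⟨σg, hv, hwin⟩ := h
  refine ⟨sigB L σg, valid_sigB L σg hv, ?_⟩
  have h0 : Inv2 L σg (.sp (s, t) none .star) (.sp (s, t) none none .star) :=
    Or.inl ⟨(s, t), .star, .star, rfl, rfl, hwin⟩
  exact transfer GConf.dupOwned (GMove L (∅ : Set Face) Rw.check) GConf.reward σg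
    BConf.dupOwned (BMove L) BConf.reward (sigB L σg) (Inv2 L σg) rank2
    (dir2_hW L σg) (dir2_H1 L σg) (dir2_H2 L σg hv) h0

end MainAssembly

/-- The `∅`-generic bisimulation game specialises to the branching
bisimulation game: `s ≡b t` iff `s ≡_∅ t`. -/
theorem bbEquiv_iff_gbEquiv_empty {S : Type u} {A : Type v} (L : LTS S A)
    (s t : S) :
    L.bbEquiv s t ↔ L.gbEquiv (∅ : Set Face) s t := by
  exact ⟨dir1_main L, dir2_main L⟩

end GamesBisim
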